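/- Let S be a finite singleton-rich semigroup and s, t ∈ S. The sequence φ(s^φ_i, t^φ_i) is eventually constant: there exists i° such that φ(s^φ_i, t^φ_i) = φ(s^φ_{i°}, t^φ_{i°}) for all i ≥ i°. (Here φ(x,y) = (x*y)⁺ and s^φ, t^φ are the φ-sequences starting at (s,t).) The common eventual value is denoted φ^{(s,t)}. -/

import Mathlib

/-!
Each term `φ(s^φ_{i+1}, t^φ_{i+1})` lies below `φ(s^φ_i, t^φ_i)` in the natural order of
idempotents: `e = φ(s^φ_i, t^φ_i)` is a right identity of `s^φ_{i+1}` (hence of its `*`) and a left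
identity of `t^φ_{i+1}`, so it is a left identity of `(s^φ_{i+1})* t^φ_{i+1}` and is absorbed by
the `⁺` of that element. A descending sequence in a finite set takes some value infinitely often,
and antisymmetry pins every later term to that value.
-/

open scoped Classical

/-- φ*(s): the idempotent right identities of `s`. -/
def rIds {S : Type*} [Mul S] (s : S) : Set S := {e | e * e = e ∧ s * e = s}

/-- φ⁺(s): the idempotent left identities of `s`. -/
def lIds {S : Type*} [Mul S] (s : S) : Set S := {e | e * e = e ∧ e * s = s}

/-- `x` is the (necessarily unique) element of a singleton kernel (minimal ideal) of the
subsemigroup `T`: `{x}` is an ideal of `T`, hence the minimal ideal of `T`. -/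
def IsKer {S : Type*} [Semigroup S] (T : Subsemigroup S) (x : S) : Prop :=
  x ∈ T ∧ ∀ a ∈ T, a * x = x ∧ x * a = x

/-- The natural partial order on idempotents: `e ≤ f` iff `ef = fe = e`. -/
def nle {S : Type*} [Mul S] (e f : S) : Prop := e * f = e ∧ f * e = e

/-- The relation `≪`: `s ≪ t` iff `s = s⁺ t s*`, where `sa s = s*` and `pl s = s⁺`. -/
def ll {S : Type*} [Mul S] (sa pl : S → S) (s t : S) : Prop := s = pl s * t * sa s

/-- φ(x,y) = (x* y)⁺. -/
def phiF {S : Type*} [Mul S] (sa pl : S → S) (x y : S) : S := pl (sa x * y)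

/-- ψ(x,y) = (x y⁺)*. -/
def psiF {S : Type*} [Mul S] (sa pl : S → S) (x y : S) : S := sa (x * pl y)

/-- The φ-sequence: `(s^φ₀, t^φ₀) = (s, t)`,
`s^φ_{i+1} = s^φ_i φ(s^φ_i, t^φ_i)`, `t^φ_{i+1} = (s^φ_i)* t^φ_i`. -/
def phiSeq {S : Type*} [Mul S] (sa pl : S → S) (s t : S) : ℕ → S × S
  | 0 => (s, t)
  | i + 1 =>
      let p := phiSeq sa pl s t i
      (p.1 * phiF sa pl p.1 p.2, sa p.1 * p.2)

/-- The ψ-sequence: `(s^ψ₀, t^ψ₀) = (s, t)`,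
`s^ψ_{i+1} = s^ψ_i (t^ψ_i)⁺`, `t^ψ_{i+1} = ψ(s^ψ_i, t^ψ_i) t^ψ_i`. -/
def psiSeq {S : Type*} [Mul S] (sa pl : S → S) (s t : S) : ℕ → S × S
  | 0 => (s, t)
  | i + 1 =>
      let p := psiSeq sa pl s t i
      (p.1 * pl p.2, psiF sa pl p.1 p.2 * p.2)

lemma rel_of_lt_of_forall_rel_succ {α : Type*} {r : α → α → Prop}
    (trans : ∀ a b c, r a b → r b c → r a c) {e : ℕ → α} (step : ∀ i, r (e (i + 1)) (e i))
    {i j : ℕ} (hij : i < j) : r (e j) (e i) := by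
  replace hij : i + 1 ≤ j := hij
  induction j, hij using Nat.le_induction with
  | base => exact step i
  | succ j hij ih => exact trans _ _ _ (step j) ih

lemma exists_eventually_eq_of_forall_rel_succ {α : Type*} [Finite α] {r : α → α → Prop}
    (trans : ∀ a b c, r a b → r b c → r a c) (antisymm : ∀ a b, r a b → r b a → a = b)
    {e : ℕ → α} (step : ∀ i, r (e (i + 1)) (e i)) : ∃ N, ∀ i ≥ N, e i = e N := by
  obtain ⟨v, hv⟩ := Finite.exists_infinite_fiber e
  have hfiber : (e ⁻¹' {v}).Infinite := Set.infinite_coe_iff.mp hv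
  obtain ⟨N, hN⟩ := hfiber.nonempty
  refine ⟨N, fun i hi => ?_⟩
  rcases hi.eq_or_lt with rfl | hNi
  · rfl
  obtain ⟨j, hj, hij⟩ := hfiber.exists_gt i
  have hji : r (e j) (e i) := rel_of_lt_of_forall_rel_succ trans step hij
  rw [show e j = e N from hj.trans hN.symm] at hji
  exact antisymm _ _ (rel_of_lt_of_forall_rel_succ trans step hNi) hji

section Semigroup

variable {S : Type*} [Semigroup S]

lemma nle_trans {e f g : S} (hef : nle e f) (hfg : nle f g) : nle e g :=
  ⟨by rw [← hef.1, mul_assoc, hfg.1], by rw [← hef.2, ← mul_assoc, hfg.2]⟩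

lemma nle_antisymm {e f : S} (hef : nle e f) (hfe : nle f e) : e = f := by
  rw [← hef.2, hfe.1]

lemma IsKer.mul_self {T : Subsemigroup S} {x : S} (hx : IsKer T x) : x * x = x :=
  (hx.2 x hx.1).1

lemma mul_eq_of_mem_closure_lIds {x a : S} (ha : a ∈ Subsemigroup.closure (lIds x)) :
    a * x = x := by
  induction ha using Subsemigroup.closure_induction with
  | mem e he => exact he.2
  | mul a b _ _ ha hb => rw [mul_assoc, hb, ha]

variable {sa pl : S → S}

lemma phiF_nle_of_mem_rIds_of_mem_lIds
    (hsa : ∀ s : S, IsKer (Subsemigroup.closure (rIds s)) (sa s))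
    (hpl : ∀ s : S, IsKer (Subsemigroup.closure (lIds s)) (pl s))
    {e s t : S} (hs : e ∈ rIds s) (ht : e ∈ lIds t) : nle (phiF sa pl s t) e := by
  have hesa : e * sa s = sa s := ((hsa s).2 e (Subsemigroup.subset_closure hs)).1
  have hl : e ∈ lIds (sa s * t) := ⟨ht.1, by rw [← mul_assoc, hesa]⟩
  have habs := (hpl _).2 e (Subsemigroup.subset_closure hl)
  exact ⟨habs.2, habs.1⟩

lemma phiF_phiSeq_succ_nle (hsa : ∀ s : S, IsKer (Subsemigroup.closure (rIds s)) (sa s))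
    (hpl : ∀ s : S, IsKer (Subsemigroup.closure (lIds s)) (pl s)) (s t : S) (i : ℕ) :
    nle (phiF sa pl (phiSeq sa pl s t (i + 1)).1 (phiSeq sa pl s t (i + 1)).2)
      (phiF sa pl (phiSeq sa pl s t i).1 (phiSeq sa pl s t i).2) := by
  set p := phiSeq sa pl s t i
  have hidem : phiF sa pl p.1 p.2 * phiF sa pl p.1 p.2 = phiF sa pl p.1 p.2 := (hpl _).mul_self
  refine phiF_nle_of_mem_rIds_of_mem_lIds hsa hpl ⟨hidem, ?_⟩
    ⟨hidem, mul_eq_of_mem_closure_lIds (hpl _).1⟩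
  change p.1 * phiF sa pl p.1 p.2 * phiF sa pl p.1 p.2 = p.1 * phiF sa pl p.1 p.2
  rw [mul_assoc, hidem]

end Semigroup

/-- The sequence `φ(s^φ_i, t^φ_i)` is eventually constant. -/
theorem stmt12 {S : Type*} [Semigroup S] [Fintype S] (sa pl : S → S)
    (hsa : ∀ s : S, IsKer (Subsemigroup.closure (rIds s)) (sa s))
    (hpl : ∀ s : S, IsKer (Subsemigroup.closure (lIds s)) (pl s))
    (s t : S) :
    ∃ N : ℕ, ∀ i ≥ N,
      phiF sa pl (phiSeq sa pl s t i).1 (phiSeq sa pl s t i).2 =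
        phiF sa pl (phiSeq sa pl s t N).1 (phiSeq sa pl s t N).2 :=
  exists_eventually_eq_of_forall_rel_succ (r := nle) (fun _ _ _ => nle_trans)
    (fun _ _ => nle_antisymm) (phiF_phiSeq_succ_nle hsa hpl s t)
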